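/- arXiv:2309.00596 — 2 statements merged into one kernel-verified Lean document; each statement's English description precedes it below -/
import Mathlib

section
/- A symmetric bilinear form 𝓡 on Λ²ℝ^n has 2-nonnegative curvature operator in the classical sense (the sum of its two smallest eigenvalues is nonnegative) if and only if 𝓡(ω, ω̄) ≥ 0 for every isotropic ω ∈ Λ²ℂ^n. -/
open scoped BigOperators ComplexOrder
open Complex Matrix

noncomputable section

/-- Wedge product of two vectors, modelled as an antisymmetric matrix. -/
def wedge {n : ℕ} {𝕜 : Type} [CommRing 𝕜] (v w : Fin n → 𝕜) :
    Matrix (Fin n) (Fin n) 𝕜 := fun i j => v i * w j - v j * w i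

/-- Euclidean inner product on ℝ^n. -/
def gR {n : ℕ} (a b : Fin n → ℝ) : ℝ := ∑ i, a i * b i

/-- Complex-bilinear extension of the Euclidean inner product to ℂ^n. -/
def gC {n : ℕ} (v w : Fin n → ℂ) : ℂ := ∑ i, v i * w i

def vecConj {n : ℕ} (v : Fin n → ℂ) : Fin n → ℂ := fun i => (starRingEnd ℂ) (v i)

def vecC {n : ℕ} (a : Fin n → ℝ) : Fin n → ℂ := fun i => (a i : ℂ)

/-- Inner product on Λ²ℝ^n in the matrix model. -/
def IR {n : ℕ} (α β : Matrix (Fin n) (Fin n) ℝ) : ℝ := (1/2) * (∑ i, ∑ j, α i j * β i j)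

/-- Complex-bilinear extension of the inner product to Λ²ℂ^n. -/
def IC {n : ℕ} (ω η : Matrix (Fin n) (Fin n) ℂ) : ℂ := (1/2) * (∑ i, ∑ j, ω i j * η i j)

def matConj {n : ℕ} (ω : Matrix (Fin n) (Fin n) ℂ) : Matrix (Fin n) (Fin n) ℂ :=
  fun i j => (starRingEnd ℂ) (ω i j)

def matRe {n : ℕ} (ω : Matrix (Fin n) (Fin n) ℂ) : Matrix (Fin n) (Fin n) ℝ :=
  fun i j => (ω i j).re

def matIm {n : ℕ} (ω : Matrix (Fin n) (Fin n) ℂ) : Matrix (Fin n) (Fin n) ℝ :=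
  fun i j => (ω i j).im

def matC {n : ℕ} (α : Matrix (Fin n) (Fin n) ℝ) : Matrix (Fin n) (Fin n) ℂ :=
  fun i j => (α i j : ℂ)

/-- Λ²ℝ^n : antisymmetric real matrices. -/
def SkewR (n : ℕ) : Set (Matrix (Fin n) (Fin n) ℝ) := {M | Mᵀ = -M}

/-- Λ²ℂ^n : antisymmetric complex matrices. -/
def SkewC (n : ℕ) : Set (Matrix (Fin n) (Fin n) ℂ) := {M | Mᵀ = -M}

/-- ω is simple: a nonzero wedge of two vectors. -/
def IsSimple {n : ℕ} (ω : Matrix (Fin n) (Fin n) ℂ) : Prop :=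
  ω ≠ 0 ∧ ∃ v w : Fin n → ℂ, ω = wedge v w

/-- The type of (candidate) curvature tensors: bilinear forms on Λ²ℝ^n in the matrix model. -/
abbrev CurvOp (n : ℕ) := Matrix (Fin n) (Fin n) ℝ → Matrix (Fin n) (Fin n) ℝ → ℝ

structure IsSymmBilin {n : ℕ} (R : CurvOp n) : Prop where
  add_left : ∀ α β γ, R (α + β) γ = R α γ + R β γ
  smul_left : ∀ (c : ℝ) (α β), R (c • α) β = c * R α β
  symm : ∀ α β, R α β = R β α

/-- First Bianchi identity. -/
def Bianchi {n : ℕ} (R : CurvOp n) : Prop :=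
  ∀ v w x y : Fin n → ℝ,
    R (wedge v w) (wedge x y) + R (wedge v x) (wedge y w) + R (wedge v y) (wedge w x) = 0

/-- Complex-bilinear extension of a real bilinear form on Λ²ℝ^n to Λ²ℂ^n. -/
def RC {n : ℕ} (R : CurvOp n) (ω η : Matrix (Fin n) (Fin n) ℂ) : ℂ :=
  ((R (matRe ω) (matRe η) - R (matIm ω) (matIm η) : ℝ) : ℂ) +
    Complex.I * ((R (matRe ω) (matIm η) + R (matIm ω) (matRe η) : ℝ) : ℂ)

/-- Standard basis vector of ℝ^n. -/
def stdB (n : ℕ) (j : Fin n) : Fin n → ℝ := fun k => if k = j then 1 else 0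

/-- Ricci curvature of a curvature tensor. -/
def Ric {n : ℕ} (R : CurvOp n) (u : Fin n → ℝ) : ℝ :=
  ∑ j, R (wedge u (stdB n j)) (wedge u (stdB n j))

/-- Scalar curvature. -/
def Scal {n : ℕ} (R : CurvOp n) : ℝ := ∑ i, Ric R (stdB n i)
/-- 2-nonnegativity via eigenvalues: any two eigenvalues of the self-adjoint operator
(w.r.t. the inner product IR on Λ²ℝ^n) admitting orthogonal eigenvectors sum to ≥ 0;
this is the statement that the sum of the two smallest eigenvalues is nonnegative. -/
def TwoNonnegEigen {n : ℕ} (R : CurvOp n) : Prop :=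
  ∀ (lam mu : ℝ) (α β : Matrix (Fin n) (Fin n) ℝ),
    α ∈ SkewR n → β ∈ SkewR n → α ≠ 0 → β ≠ 0 → IR α β = 0 →
    (∀ γ ∈ SkewR n, R α γ = lam * IR α γ) →
    (∀ γ ∈ SkewR n, R β γ = mu * IR β γ) → 0 ≤ lam + mu

/-!
Write `ω = α + iβ`. Isotropy of `ω` says that `α` and `β` are orthogonal of equal length, and
then `𝓡(ω, ω̄) = 𝓡(α, α) + 𝓡(β, β)`. So the isotropic condition says that `𝓡(α, α) + 𝓡(β, β) ≥ 0`
for every orthogonal pair of equal length. Applied to rescaled orthogonal eigenvectors for `λ` and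
`μ`, this gives `λ + μ ≥ 0`. Conversely, for an orthonormal pair `α, β` and an orthonormal
eigenbasis `(e_k)` with eigenvalues `λ_k`, `𝓡(α, α) + 𝓡(β, β) = ∑ λ_k t_k` with
`t_k = ⟨e_k, α⟩² + ⟨e_k, β⟩²`; the weights lie in `[0, 1]` by Bessel and sum to `2`, and such a
combination is nonnegative as soon as any two eigenvalues with distinct indices have a nonnegative
sum.
-/

open scoped RealInnerProductSpace

section SpectralPairs

theorem sum_mul_nonneg_of_add_nonneg {ι : Type*} [Fintype ι] [DecidableEq ι] {lam t : ι → ℝ}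
    (hlam : ∀ k l, k ≠ l → 0 ≤ lam k + lam l) (ht₀ : ∀ k, 0 ≤ t k) (ht₁ : ∀ k, t k ≤ 1)
    (hsum : ∑ k, t k = 2) : 0 ≤ ∑ k, lam k * t k := by
  by_cases hpos : ∀ k, 0 ≤ lam k
  · exact Finset.sum_nonneg fun k _ => mul_nonneg (hpos k) (ht₀ k)
  push Not at hpos
  obtain ⟨i, hi⟩ := hpos
  -- every other `lam k` is at least `-lam i > 0`, and the weights off `i` sum to `2 - t i ≥ 1`
  have hrest : -lam i * (2 - t i) ≤ ∑ k ∈ Finset.univ.erase i, lam k * t k := by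
    rw [← hsum, ← Finset.sum_erase_eq_sub (Finset.mem_univ i), Finset.mul_sum]
    refine Finset.sum_le_sum fun k hk => mul_le_mul_of_nonneg_right ?_ (ht₀ k)
    linarith [hlam k i (Finset.ne_of_mem_erase hk)]
  rw [← Finset.add_sum_erase _ _ (Finset.mem_univ i)]
  nlinarith [mul_nonneg (neg_nonneg.2 hi.le) (sub_nonneg.2 (ht₁ i))]

variable {E : Type*} [NormedAddCommGroup E] [InnerProductSpace ℝ E] [FiniteDimensional ℝ E]

noncomputable def endOfBilin (B : E →ₗ[ℝ] E →ₗ[ℝ] ℝ) : E →ₗ[ℝ] E :=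
  ↑((InnerProductSpace.toDual ℝ E).toLinearEquiv ≪≫ₗ LinearMap.toContinuousLinearMap.symm).symm ∘ₗ B

theorem inner_endOfBilin (B : E →ₗ[ℝ] E →ₗ[ℝ] ℝ) (x y : E) : ⟪endOfBilin B x, y⟫ = B x y := by
  simp only [endOfBilin, LinearEquiv.trans_symm, LinearEquiv.symm_symm, LinearMap.coe_comp,
    LinearEquiv.coe_coe, Function.comp_apply, LinearEquiv.trans_apply,
    LinearIsometryEquiv.coe_symm_toLinearEquiv]
  exact InnerProductSpace.toDual_symm_apply

theorem isSymmetric_endOfBilin {B : E →ₗ[ℝ] E →ₗ[ℝ] ℝ} (hB : ∀ x y, B x y = B y x) :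
    (endOfBilin B).IsSymmetric := fun x y => by
  rw [inner_endOfBilin, real_inner_comm, inner_endOfBilin, hB]

namespace LinearMap.IsSymmetric

variable {T : E →ₗ[ℝ] E} (hT : T.IsSymmetric)
include hT

theorem inner_apply_self_eq_sum {N : ℕ} (hN : Module.finrank ℝ E = N) (x : E) :
    ⟪T x, x⟫ = ∑ k, hT.eigenvalues hN k * ⟪hT.eigenvectorBasis hN k, x⟫ ^ 2 := by
  rw [← (hT.eigenvectorBasis hN).sum_inner_mul_inner]
  refine Finset.sum_congr rfl fun k _ => ?_
  rw [hT, hT.apply_eigenvectorBasis, RCLike.ofReal_real_eq_id, id_eq, real_inner_smul_right,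
    real_inner_comm x]
  ring

theorem inner_add_inner_nonneg_of_orthonormal
    (hpair : ∀ (u v : E) (a b : ℝ), u ≠ 0 → v ≠ 0 → ⟪u, v⟫ = 0 → T u = a • u → T v = b • v →
      0 ≤ a + b)
    {x y : E} (hxy : Orthonormal ℝ ![x, y]) : 0 ≤ ⟪T x, x⟫ + ⟪T y, y⟫ := by
  set u := hT.eigenvectorBasis rfl
  have hu_eig : ∀ k, T (u k) = hT.eigenvalues rfl k • u k := fun k => by
    rw [hT.apply_eigenvectorBasis]; rfl
  rw [hT.inner_apply_self_eq_sum rfl, hT.inner_apply_self_eq_sum rfl, ← Finset.sum_add_distrib]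
  simp_rw [← mul_add]
  refine sum_mul_nonneg_of_add_nonneg (fun k l hkl => ?_) (fun k => by positivity) (fun k => ?_) ?_
  · exact hpair _ _ _ _ (u.orthonormal.ne_zero k) (u.orthonormal.ne_zero l)
      (u.orthonormal.inner_eq_zero hkl) (hu_eig k) (hu_eig l)
  · simpa [Fin.sum_univ_two, real_inner_comm, u.orthonormal.norm_eq_one] using
      hxy.sum_inner_products_le (s := Finset.univ) (u k)
  · rw [Finset.sum_add_distrib, u.sum_sq_inner_right, u.sum_sq_inner_right]
    have hx : ‖x‖ = 1 := hxy.norm_eq_one 0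
    have hy : ‖y‖ = 1 := hxy.norm_eq_one 1
    norm_num [hx, hy]

theorem inner_add_inner_nonneg
    (hpair : ∀ (u v : E) (a b : ℝ), u ≠ 0 → v ≠ 0 → ⟪u, v⟫ = 0 → T u = a • u → T v = b • v →
      0 ≤ a + b)
    {x y : E} (hxy : ⟪x, y⟫ = 0) (hnorm : ‖x‖ = ‖y‖) : 0 ≤ ⟪T x, x⟫ + ⟪T y, y⟫ := by
  rcases eq_or_ne x 0 with rfl | hx
  · rw [norm_zero, eq_comm, norm_eq_zero] at hnorm
    simp [hnorm]
  have hr : 0 < ‖x‖ := norm_pos_iff.2 hx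
  have h := hT.inner_add_inner_nonneg_of_orthonormal hpair (x := ‖x‖⁻¹ • x) (y := ‖x‖⁻¹ • y) (by
    simp [orthonormal_vecCons_iff, norm_smul, real_inner_smul_left, real_inner_smul_right, hxy,
      ← hnorm, hr.ne'])
  simp only [map_smul, real_inner_smul_left, real_inner_smul_right, ← mul_add] at h
  have hr' := inv_pos.2 hr
  exact (mul_nonneg_iff_of_pos_left hr').1 <| (mul_nonneg_iff_of_pos_left hr').1 h

end LinearMap.IsSymmetric

end SpectralPairs

section MatrixModel

variable {n : ℕ}

variable (n) in
def skewSubmodule : Submodule ℝ (Matrix (Fin n) (Fin n) ℝ) where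
  carrier := SkewR n
  add_mem' {α β} hα hβ := show (α + β)ᵀ = -(α + β) by
    rw [transpose_add, show αᵀ = -α from hα, show βᵀ = -β from hβ, neg_add]
  zero_mem' := show (0 : Matrix (Fin n) (Fin n) ℝ)ᵀ = -0 by simp
  smul_mem' c α hα := show (c • α)ᵀ = -(c • α) by
    rw [transpose_smul, show αᵀ = -α from hα, smul_neg]

theorem mem_skewSubmodule {α : Matrix (Fin n) (Fin n) ℝ} : α ∈ skewSubmodule n ↔ α ∈ SkewR n :=
  Iff.rfl

variable (n) in
def flat : Matrix (Fin n) (Fin n) ℝ ≃ₗ[ℝ] EuclideanSpace ℝ (Fin n × Fin n) :=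
  (LinearEquiv.curry ℝ ℝ (Fin n) (Fin n)).symm.trans (WithLp.linearEquiv 2 ℝ _).symm

@[simp]
theorem flat_apply (α : Matrix (Fin n) (Fin n) ℝ) (p : Fin n × Fin n) : flat n α p = α p.1 p.2 :=
  rfl

theorem inner_flat (α β : Matrix (Fin n) (Fin n) ℝ) : ⟪flat n α, flat n β⟫ = 2 * IR α β := by
  simp [PiLp.inner_apply, Fintype.sum_prod_type, IR, mul_comm]

theorem IR_smul_smul (a b : ℝ) (α β : Matrix (Fin n) (Fin n) ℝ) :
    IR (a • α) (b • β) = a * b * IR α β := by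
  have := inner_flat (a • α) (b • β)
  rw [map_smul, map_smul, real_inner_smul_left, real_inner_smul_right, inner_flat] at this
  linarith

theorem IR_self_pos {α : Matrix (Fin n) (Fin n) ℝ} (hα : α ≠ 0) : 0 < IR α α := by
  have := inner_flat α α
  have := real_inner_self_pos.2 ((flat n).map_ne_zero_iff.2 hα)
  linarith

end MatrixModel

namespace IsSymmBilin

variable {n : ℕ} {R : CurvOp n} (hR : IsSymmBilin R)
include hR

theorem add_right (α β γ : Matrix (Fin n) (Fin n) ℝ) : R α (β + γ) = R α β + R α γ := by
  rw [hR.symm, hR.add_left, hR.symm β, hR.symm γ]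

theorem smul_right (c : ℝ) (α β : Matrix (Fin n) (Fin n) ℝ) : R α (c • β) = c * R α β := by
  rw [hR.symm, hR.smul_left, hR.symm]

def toLinearMap₂ : Matrix (Fin n) (Fin n) ℝ →ₗ[ℝ] Matrix (Fin n) (Fin n) ℝ →ₗ[ℝ] ℝ :=
  LinearMap.mk₂ ℝ R hR.add_left hR.smul_left hR.add_right hR.smul_right

@[simp]
theorem toLinearMap₂_apply (α β : Matrix (Fin n) (Fin n) ℝ) : hR.toLinearMap₂ α β = R α β :=
  rfl

theorem neg_right (α β : Matrix (Fin n) (Fin n) ℝ) : R α (-β) = -R α β := by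
  simpa using (hR.toLinearMap₂ α).map_neg β

theorem smul_smul (a b : ℝ) (α β : Matrix (Fin n) (Fin n) ℝ) :
    R (a • α) (b • β) = a * b * R α β := by
  rw [hR.smul_left, hR.smul_right, mul_assoc]

end IsSymmBilin

section Complexification

variable {n : ℕ}

theorem mem_SkewC_iff {ω : Matrix (Fin n) (Fin n) ℂ} :
    ω ∈ SkewC n ↔ matRe ω ∈ SkewR n ∧ matIm ω ∈ SkewR n := by
  simp only [SkewC, SkewR, Set.mem_ofPred_eq, ← Matrix.ext_iff, Complex.ext_iff, matRe, matIm,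
    transpose_apply, Matrix.neg_apply, Complex.neg_re, Complex.neg_im, forall_and]

def matMk (α β : Matrix (Fin n) (Fin n) ℝ) : Matrix (Fin n) (Fin n) ℂ := fun i j => ⟨α i j, β i j⟩

theorem re_IC_self (ω : Matrix (Fin n) (Fin n) ℂ) :
    (IC ω ω).re = IR (matRe ω) (matRe ω) - IR (matIm ω) (matIm ω) := by
  simp [IC, IR, matRe, matIm, Complex.re_sum, Finset.mul_sum, ← Finset.sum_sub_distrib, mul_sub]

theorem im_IC_self (ω : Matrix (Fin n) (Fin n) ℂ) :
    (IC ω ω).im = 2 * IR (matRe ω) (matIm ω) := by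
  simp only [IC, IR, matRe, matIm, Complex.im_sum, Finset.mul_sum, Complex.mul_im]
  refine Finset.sum_congr rfl fun i _ => Finset.sum_congr rfl fun j _ => ?_
  norm_num
  ring

theorem IC_self_eq_zero_iff {ω : Matrix (Fin n) (Fin n) ℂ} :
    IC ω ω = 0 ↔ IR (matRe ω) (matRe ω) = IR (matIm ω) (matIm ω) ∧ IR (matRe ω) (matIm ω) = 0 := by
  rw [Complex.ext_iff, re_IC_self, im_IC_self, Complex.zero_re, Complex.zero_im, sub_eq_zero,
    mul_eq_zero, or_iff_right two_ne_zero]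

theorem RC_matConj {R : CurvOp n} (hR : IsSymmBilin R) (ω : Matrix (Fin n) (Fin n) ℂ) :
    RC R ω (matConj ω) = ((R (matRe ω) (matRe ω) + R (matIm ω) (matIm ω) : ℝ) : ℂ) := by
  have hre : matRe (matConj ω) = matRe ω := by ext i j; simp [matRe, matConj]
  have him : matIm (matConj ω) = -matIm ω := by ext i j; simp [matIm, matConj]
  rw [RC, hre, him, hR.neg_right, hR.neg_right, hR.symm (matIm ω) (matRe ω)]
  push_cast
  ring

theorem isotropic_nonneg_iff {R : CurvOp n} (hR : IsSymmBilin R) :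
    (∀ ω : Matrix (Fin n) (Fin n) ℂ, ω ∈ SkewC n → IC ω ω = 0 → 0 ≤ RC R ω (matConj ω)) ↔
      ∀ α ∈ SkewR n, ∀ β ∈ SkewR n, IR α α = IR β β → IR α β = 0 → 0 ≤ R α α + R β β := by
  simp only [RC_matConj hR, Complex.zero_le_real]
  constructor
  · intro h α hα β hβ hnorm horth
    exact h (matMk α β) (mem_SkewC_iff.2 ⟨hα, hβ⟩) (IC_self_eq_zero_iff.2 ⟨hnorm, horth⟩)
  · intro h ω hω hiso
    obtain ⟨hre, him⟩ := mem_SkewC_iff.1 hω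
    obtain ⟨hnorm, horth⟩ := IC_self_eq_zero_iff.1 hiso
    exact h _ hre _ him hnorm horth

end Complexification

section CurvatureOperator

variable {n : ℕ}

variable (n) in
abbrev skewSpace : Submodule ℝ (EuclideanSpace ℝ (Fin n × Fin n)) :=
  (skewSubmodule n).map (flat n : Matrix (Fin n) (Fin n) ℝ →ₗ[ℝ] EuclideanSpace ℝ (Fin n × Fin n))

variable (n) in
def skewEquiv : skewSubmodule n ≃ₗ[ℝ] skewSpace n := (flat n).submoduleMap (skewSubmodule n)

theorem inner_skewEquiv (α β : skewSubmodule n) :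
    ⟪skewEquiv n α, skewEquiv n β⟫ = 2 * IR (α : Matrix (Fin n) (Fin n) ℝ) β :=
  inner_flat (α : Matrix (Fin n) (Fin n) ℝ) β

variable {R : CurvOp n} (hR : IsSymmBilin R)
include hR

def curvEnd : skewSpace n →ₗ[ℝ] skewSpace n :=
  let toMatrix := (skewSubmodule n).subtype ∘ₗ (skewEquiv n).symm.toLinearMap
  endOfBilin (hR.toLinearMap₂.compl₁₂ toMatrix toMatrix)

theorem inner_curvEnd_skewEquiv (α β : skewSubmodule n) :
    ⟪curvEnd hR (skewEquiv n α), skewEquiv n β⟫ = R α β := by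
  rw [curvEnd, inner_endOfBilin]
  simp

theorem isSymmetric_curvEnd : (curvEnd hR).IsSymmetric :=
  isSymmetric_endOfBilin fun _ _ => hR.symm _ _

theorem TwoNonnegEigen.curvEnd_eigenvalues_add_nonneg (h2 : TwoNonnegEigen R)
    (u v : skewSpace n) (a b : ℝ) (hu : u ≠ 0) (hv : v ≠ 0) (huv : ⟪u, v⟫ = 0)
    (hau : curvEnd hR u = a • u) (hbv : curvEnd hR v = b • v) : 0 ≤ a + b := by
  obtain ⟨α, rfl⟩ := (skewEquiv n).surjective u
  obtain ⟨β, rfl⟩ := (skewEquiv n).surjective v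
  -- an eigenvalue `c` of `curvEnd` is an eigenvalue `2 * c` of `R` relative to `IR`
  have heig : ∀ (γ : skewSubmodule n) (c : ℝ), curvEnd hR (skewEquiv n γ) = c • skewEquiv n γ →
      ∀ δ ∈ SkewR n, R γ δ = 2 * c * IR γ δ := by
    intro γ c hγ δ hδ
    rw [← inner_curvEnd_skewEquiv hR γ ⟨δ, mem_skewSubmodule.2 hδ⟩, hγ,
      real_inner_smul_left (skewEquiv n γ) _ c, inner_skewEquiv]
    ring
  rw [inner_skewEquiv] at huv
  have := h2 (2 * a) (2 * b) α β α.2 β.2 (by simpa using hu) (by simpa using hv) (by linarith)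
    (heig α a hau) (heig β b hbv)
  linarith

theorem TwoNonnegEigen.add_nonneg (h2 : TwoNonnegEigen R) {α β : Matrix (Fin n) (Fin n) ℝ}
    (hα : α ∈ SkewR n) (hβ : β ∈ SkewR n) (hnorm : IR α α = IR β β) (horth : IR α β = 0) :
    0 ≤ R α α + R β β := by
  let a : skewSubmodule n := ⟨α, mem_skewSubmodule.2 hα⟩
  let b : skewSubmodule n := ⟨β, mem_skewSubmodule.2 hβ⟩
  have h := (isSymmetric_curvEnd hR).inner_add_inner_nonneg (h2.curvEnd_eigenvalues_add_nonneg hR)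
    (x := skewEquiv n a) (y := skewEquiv n b)
    (by rw [inner_skewEquiv]; exact mul_eq_zero_of_right 2 horth)
    (by rw [norm_eq_sqrt_real_inner, norm_eq_sqrt_real_inner, inner_skewEquiv, inner_skewEquiv]
        exact congrArg (fun r => √(2 * r)) hnorm)
  rwa [inner_curvEnd_skewEquiv, inner_curvEnd_skewEquiv] at h

end CurvatureOperator

theorem twoNonnegEigen_of_add_nonneg {n : ℕ} {R : CurvOp n} (hR : IsSymmBilin R)
    (h : ∀ α ∈ SkewR n, ∀ β ∈ SkewR n, IR α α = IR β β → IR α β = 0 → 0 ≤ R α α + R β β) :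
    TwoNonnegEigen R := by
  intro lam mu α β hα hβ hα0 hβ0 horth hlam hmu
  -- rescale so that both have squared length `IR α α * IR β β`
  set a := √(IR β β)
  set b := √(IR α α)
  have ha : a * a = IR β β := Real.mul_self_sqrt (IR_self_pos hβ0).le
  have hb : b * b = IR α α := Real.mul_self_sqrt (IR_self_pos hα0).le
  have h := h (a • α) ((skewSubmodule n).smul_mem a hα) (b • β) ((skewSubmodule n).smul_mem b hβ)
    (by rw [IR_smul_smul, IR_smul_smul, ha, hb, mul_comm]) (by rw [IR_smul_smul, horth, mul_zero])
  rw [hR.smul_smul, hR.smul_smul, hlam α hα, hmu β hβ, ha, hb] at h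
  have hpos := mul_pos (IR_self_pos hα0) (IR_self_pos hβ0)
  nlinarith

theorem stmt_6 (n : ℕ) (R : CurvOp n) (hR : IsSymmBilin R) :
    TwoNonnegEigen R ↔
      ∀ ω : Matrix (Fin n) (Fin n) ℂ, ω ∈ SkewC n → IC ω ω = 0 →
        0 ≤ RC R ω (matConj ω) := by
  rw [isotropic_nonneg_iff hR]
  exact ⟨fun h2 α hα β hβ => h2.add_nonneg hR hα hβ, twoNonnegEigen_of_add_nonneg hR⟩
end
end

section
/- In dimension n = 3, an algebraic curvature tensor is weakly PIC1 (𝓡(ω, ω̄) ≥ 0 for every simple isotropic ω ∈ Λ²ℂ³) if and only if it has nonnegative Ricci curvature. -/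
open scoped BigOperators ComplexOrder
open Complex Matrix

noncomputable section

/-!
In dimension three the Hodge star `hodge` identifies vectors with 2-forms, with
`wedge v w = hodge (v ⨯₃ w)`. Hence every nonzero 2-form is simple, and `hodge (a + i b)` is
isotropic exactly when `a ⬝ᵥ b = 0` and `|a| = |b|`; for such a form `ω`,
`𝓡(ω, ω̄) = 𝓡(⋆a, ⋆a) + 𝓡(⋆b, ⋆b)`. On the Ricci side, the rule `(a × b) × e_j = a_j b - b_j a`
gives `Ric(a × b) = |a|² 𝓡(⋆b, ⋆b) - 2 ⟨a, b⟩ 𝓡(⋆a, ⋆b) + |b|² 𝓡(⋆a, ⋆a)`, which for such a pair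
is `|a|² (𝓡(⋆a, ⋆a) + 𝓡(⋆b, ⋆b))`. Every line of `ℝ³` is spanned by `a × b` for such a pair, so
both conditions say that `𝓡(⋆a, ⋆a) + 𝓡(⋆b, ⋆b) ≥ 0` for all of them.
-/

namespace IsSymmBilin

variable {n : ℕ} {R : CurvOp n}

def toBilinForm (hR : IsSymmBilin R) : LinearMap.BilinForm ℝ (Matrix (Fin n) (Fin n) ℝ) :=
  LinearMap.mk₂ ℝ R hR.add_left hR.smul_left
    (fun α β γ => by rw [hR.symm, hR.add_left, hR.symm β, hR.symm γ])
    (fun c α β => by rw [hR.symm, hR.smul_left, hR.symm, smul_eq_mul])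

@[simp]
theorem toBilinForm_apply (hR : IsSymmBilin R) (α β) : hR.toBilinForm α β = R α β := rfl

theorem apply_smul_sub_smul_self (hR : IsSymmBilin R) (x y : ℝ) (α β) :
    R (x • α - y • β) (x • α - y • β) =
      x ^ 2 * R α α - 2 * x * y * R α β + y ^ 2 * R β β := by
  simp only [← hR.toBilinForm_apply, map_sub, map_smul, LinearMap.sub_apply,
    LinearMap.smul_apply, smul_eq_mul]
  simp only [toBilinForm_apply, hR.symm β α]
  ring

theorem apply_smul_smul (hR : IsSymmBilin R) (x y : ℝ) (α β) :
    R (x • α) (y • β) = x * y * R α β := by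
  simp only [← hR.toBilinForm_apply, map_smul, LinearMap.smul_apply, smul_eq_mul]
  ring

theorem apply_neg_right (hR : IsSymmBilin R) (α β) : R α (-β) = -R α β := by
  simp only [← hR.toBilinForm_apply, map_neg]

end IsSymmBilin

theorem wedge_smul_left {n : ℕ} {𝕜 : Type} [CommRing 𝕜] (c : 𝕜) (v w : Fin n → 𝕜) :
    wedge (c • v) w = c • wedge v w := by
  ext i j
  simp only [wedge, Pi.smul_apply, Matrix.smul_apply, smul_eq_mul]
  ring

theorem stdB_eq_single (n : ℕ) (j : Fin n) : stdB n j = Pi.single j 1 := by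
  ext k
  simp [stdB, Pi.single_apply]

theorem dotProduct_self_pos {ι : Type*} [Fintype ι] {a : ι → ℝ} (ha : a ≠ 0) : 0 < a ⬝ᵥ a := by
  simpa using dotProduct_star_self_pos_iff.2 ha

theorem exists_orthogonal_cross_eq_smul {u : Fin 3 → ℝ} (hu : u ≠ 0) :
    ∃ a b : Fin 3 → ℝ, a ≠ 0 ∧ a ⬝ᵥ b = 0 ∧ a ⬝ᵥ a = b ⬝ᵥ b ∧
      ∃ c : ℝ, c ≠ 0 ∧ a ⨯₃ b = c • u := by
  obtain ⟨a, ha, hau⟩ := exists_ne_zero_dotProduct_eq_zero u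
  have hu' := dotProduct_self_pos hu
  have hs : √(u ⬝ᵥ u) ≠ 0 := (Real.sqrt_pos.2 hu').ne'
  set e := (√(u ⬝ᵥ u))⁻¹ • u with he
  have hee : e ⬝ᵥ e = 1 := by
    rw [he, smul_dotProduct, dotProduct_smul, smul_eq_mul, smul_eq_mul, ← mul_assoc, ← sq,
      inv_pow, Real.sq_sqrt hu'.le, inv_mul_cancel₀ hu'.ne']
  have hea : e ⬝ᵥ a = 0 := by rw [he, smul_dotProduct, dotProduct_comm u a, hau, smul_zero]
  refine ⟨a, e ⨯₃ a, ha, dot_cross_self e a, ?_, a ⬝ᵥ a * (√(u ⬝ᵥ u))⁻¹,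
    mul_ne_zero (dotProduct_self_pos ha).ne' (inv_ne_zero hs), ?_⟩
  · rw [cross_dot_cross, hee, hea, dotProduct_comm a e, hea]
    ring
  · rw [cross_cross_eq_smul_sub_smul', hea, zero_smul, sub_zero, he, smul_smul]

section CurvatureOperator

variable {n : ℕ} {R : CurvOp n}

theorem ric_smul (hR : IsSymmBilin R) (c : ℝ) (u : Fin n → ℝ) :
    Ric R (c • u) = c ^ 2 * Ric R u := by
  simp only [Ric, wedge_smul_left, hR.apply_smul_smul, Finset.mul_sum, sq]

theorem rc_matConj_self (hR : IsSymmBilin R) (ω : Matrix (Fin n) (Fin n) ℂ) :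
    RC R ω (matConj ω) = ((R (matRe ω) (matRe ω) + R (matIm ω) (matIm ω) : ℝ) : ℂ) := by
  have hre : matRe (matConj ω) = matRe ω := by ext i j; simp [matRe, matConj]
  have him : matIm (matConj ω) = -matIm ω := by ext i j; simp [matIm, matConj]
  rw [RC, hre, him, hR.apply_neg_right, hR.apply_neg_right, hR.symm (matIm ω) (matRe ω)]
  push_cast
  ring

end CurvatureOperator

def complexify {n : ℕ} (a b : Fin n → ℝ) : Fin n → ℂ := fun i => ⟨a i, b i⟩

theorem complexify_eq_zero_iff {n : ℕ} {a b : Fin n → ℝ} :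
    complexify a b = 0 ↔ a = 0 ∧ b = 0 := by
  simp [complexify, funext_iff, Complex.ext_iff, forall_and]

theorem complexify_dotProduct_self_eq_zero_iff {n : ℕ} {a b : Fin n → ℝ} :
    complexify a b ⬝ᵥ complexify a b = 0 ↔ a ⬝ᵥ a = b ⬝ᵥ b ∧ a ⬝ᵥ b = 0 := by
  simp only [Complex.ext_iff, dotProduct, complexify, Complex.re_sum, Complex.im_sum,
    Complex.mul_re, Complex.mul_im, Complex.zero_re, Complex.zero_im, Finset.sum_sub_distrib,
    sub_eq_zero, mul_comm (b _) (a _), ← two_mul, ← Finset.mul_sum, mul_eq_zero, two_ne_zero,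
    false_or]

section Hodge

variable {𝕜 : Type*} [CommRing 𝕜]

def hodge : (Fin 3 → 𝕜) →ₗ[𝕜] Matrix (Fin 3) (Fin 3) 𝕜 where
  toFun x := !![0, x 2, -x 1; -x 2, 0, x 0; x 1, -x 0, 0]
  map_add' x y := by ext i j; fin_cases i <;> fin_cases j <;> simp [add_comm]
  map_smul' c x := by ext i j; fin_cases i <;> fin_cases j <;> simp

theorem hodge_apply (x : Fin 3 → 𝕜) :
    hodge x = !![0, x 2, -x 1; -x 2, 0, x 0; x 1, -x 0, 0] := rfl

theorem hodge_injective : Function.Injective (hodge (𝕜 := 𝕜)) := by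
  intro x y h
  ext i
  fin_cases i
  · simpa [hodge_apply] using congr_fun (congr_fun h 1) 2
  · simpa [hodge_apply] using congr_fun (congr_fun h 2) 0
  · simpa [hodge_apply] using congr_fun (congr_fun h 0) 1

end Hodge

theorem wedge_eq_hodge_cross {𝕜 : Type} [CommRing 𝕜] (v w : Fin 3 → 𝕜) :
    wedge v w = hodge (v ⨯₃ w) := by
  ext i j
  fin_cases i <;> fin_cases j <;> simp [wedge, hodge_apply, cross_apply]

theorem exists_wedge_eq_hodge {K : Type} [Field K] (z : Fin 3 → K) :
    ∃ v w : Fin 3 → K, wedge v w = hodge z := by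
  simp_rw [wedge_eq_hodge_cross, hodge_injective.eq_iff]
  obtain h0 | h0 := ne_or_eq (z 0) 0
  · refine ⟨(z 0)⁻¹ • ![-z 1, z 0, 0], ![-z 2, 0, z 0], ?_⟩
    ext i; fin_cases i <;> simp [cross_apply] <;> field_simp
  obtain h1 | h1 := ne_or_eq (z 1) 0
  · refine ⟨(z 1)⁻¹ • ![0, -z 2, z 1], ![z 1, -z 0, 0], ?_⟩
    ext i; fin_cases i <;> simp [cross_apply] <;> field_simp
  obtain h2 | h2 := ne_or_eq (z 2) 0
  · refine ⟨(z 2)⁻¹ • ![z 2, 0, -z 0], ![0, z 2, -z 1], ?_⟩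
    ext i; fin_cases i <;> simp [cross_apply] <;> field_simp
  refine ⟨0, 0, ?_⟩
  ext i; fin_cases i <;> simp [h0, h1, h2]

theorem isSimple_iff_exists_hodge {ω : Matrix (Fin 3) (Fin 3) ℂ} :
    IsSimple ω ↔ ∃ z, z ≠ 0 ∧ ω = hodge z := by
  constructor
  · rintro ⟨hω, v, w, rfl⟩
    rw [wedge_eq_hodge_cross] at hω ⊢
    exact ⟨v ⨯₃ w, fun h => hω (by rw [h, map_zero]), rfl⟩
  · rintro ⟨z, hz, rfl⟩
    obtain ⟨v, w, h⟩ := exists_wedge_eq_hodge z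
    exact ⟨(map_ne_zero_iff _ hodge_injective).2 hz, v, w, h.symm⟩

theorem ic_hodge (z w : Fin 3 → ℂ) : IC (hodge z) (hodge w) = z ⬝ᵥ w := by
  simp [IC, hodge_apply, dotProduct, Fin.sum_univ_three]
  ring

theorem matRe_hodge (z : Fin 3 → ℂ) : matRe (hodge z) = hodge fun i => (z i).re := by
  ext i j; fin_cases i <;> fin_cases j <;> simp [matRe, hodge_apply]

theorem matIm_hodge (z : Fin 3 → ℂ) : matIm (hodge z) = hodge fun i => (z i).im := by
  ext i j; fin_cases i <;> fin_cases j <;> simp [matIm, hodge_apply]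

section Dimension3

variable {R : CurvOp 3}

theorem ric_cross (hR : IsSymmBilin R) (a b : Fin 3 → ℝ) :
    Ric R (a ⨯₃ b) = a ⬝ᵥ a * R (hodge b) (hodge b) - 2 * (a ⬝ᵥ b) * R (hodge a) (hodge b)
      + b ⬝ᵥ b * R (hodge a) (hodge a) := by
  have hwedge (j : Fin 3) : wedge (a ⨯₃ b) (stdB 3 j) = a j • hodge b - b j • hodge a := by
    rw [wedge_eq_hodge_cross, cross_cross_eq_smul_sub_smul, map_sub, map_smul, map_smul,
      stdB_eq_single, dotProduct_single, dotProduct_single, mul_one, mul_one]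
  simp only [Ric, hwedge, hR.apply_smul_sub_smul_self, dotProduct, Fin.sum_univ_three,
    hR.symm (hodge b) (hodge a)]
  ring

theorem ric_cross_of_orthogonal (hR : IsSymmBilin R) {a b : Fin 3 → ℝ}
    (hab : a ⬝ᵥ b = 0) (hnorm : a ⬝ᵥ a = b ⬝ᵥ b) :
    Ric R (a ⨯₃ b) = a ⬝ᵥ a * (R (hodge a) (hodge a) + R (hodge b) (hodge b)) := by
  rw [ric_cross hR, hab, ← hnorm]
  ring

def NonnegOnOrthogonalPairs (R : CurvOp 3) : Prop :=
  ∀ a b : Fin 3 → ℝ, a ≠ 0 → a ⬝ᵥ b = 0 → a ⬝ᵥ a = b ⬝ᵥ b →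
    0 ≤ R (hodge a) (hodge a) + R (hodge b) (hodge b)

theorem weaklyPIC1_iff_nonnegOnOrthogonalPairs (hR : IsSymmBilin R) :
    (∀ ω : Matrix (Fin 3) (Fin 3) ℂ, IsSimple ω → IC ω ω = 0 → 0 ≤ RC R ω (matConj ω)) ↔
      NonnegOnOrthogonalPairs R := by
  have hRC (a b : Fin 3 → ℝ) :
      RC R (hodge (complexify a b)) (matConj (hodge (complexify a b))) =
        ((R (hodge a) (hodge a) + R (hodge b) (hodge b) : ℝ) : ℂ) := by
    rw [rc_matConj_self hR, matRe_hodge, matIm_hodge]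
    rfl
  have hIC (a b : Fin 3 → ℝ) : IC (hodge (complexify a b)) (hodge (complexify a b)) = 0 ↔
      a ⬝ᵥ a = b ⬝ᵥ b ∧ a ⬝ᵥ b = 0 := by
    rw [ic_hodge, complexify_dotProduct_self_eq_zero_iff]
  constructor
  · intro h a b ha hab hnorm
    have hz : complexify a b ≠ 0 := fun hz => ha (complexify_eq_zero_iff.1 hz).1
    have := h _ (isSimple_iff_exists_hodge.2 ⟨_, hz, rfl⟩) ((hIC a b).2 ⟨hnorm, hab⟩)
    rwa [hRC, Complex.zero_le_real] at this
  · rintro h ω hω hiso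
    obtain ⟨z, hz, rfl⟩ := isSimple_iff_exists_hodge.1 hω
    obtain ⟨a, b, rfl⟩ : ∃ a b, z = complexify a b := ⟨_, _, rfl⟩
    obtain ⟨hnorm, hab⟩ := (hIC a b).1 hiso
    have ha : a ≠ 0 := by
      rintro rfl
      exact hz (complexify_eq_zero_iff.2 ⟨rfl, dotProduct_self_eq_zero.1 (by simp [← hnorm])⟩)
    rw [hRC, Complex.zero_le_real]
    exact h a b ha hab hnorm

theorem ric_nonneg_iff_nonnegOnOrthogonalPairs (hR : IsSymmBilin R) :
    (∀ u, 0 ≤ Ric R u) ↔ NonnegOnOrthogonalPairs R := by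
  constructor
  · intro h a b ha hab hnorm
    have hric := h (a ⨯₃ b)
    rw [ric_cross_of_orthogonal hR hab hnorm] at hric
    exact nonneg_of_mul_nonneg_right hric (dotProduct_self_pos ha)
  · intro h u
    rcases eq_or_ne u 0 with rfl | hu
    · exact (by simpa using ric_smul hR 0 0 : Ric R 0 = 0).ge
    obtain ⟨a, b, ha, hab, hnorm, c, hc, hcross⟩ := exists_orthogonal_cross_eq_smul hu
    have hric := ric_cross_of_orthogonal hR hab hnorm
    rw [hcross, ric_smul hR] at hric
    have hpos : 0 ≤ c ^ 2 * Ric R u :=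
      hric ▸ mul_nonneg (dotProduct_self_pos ha).le (h a b ha hab hnorm)
    exact nonneg_of_mul_nonneg_right hpos (by positivity)

end Dimension3

theorem stmt_19 (R : CurvOp 3) (hR : IsSymmBilin R) :
    (∀ ω : Matrix (Fin 3) (Fin 3) ℂ, IsSimple ω → IC ω ω = 0 →
        0 ≤ RC R ω (matConj ω)) ↔
      ∀ u : Fin 3 → ℝ, 0 ≤ Ric R u :=
  (weaklyPIC1_iff_nonnegOnOrthogonalPairs hR).trans
    (ric_nonneg_iff_nonnegOnOrthogonalPairs hR).symm
end
end
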